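/- Let X be a normed space of dimension at least 2. Then numerical radius parallelism in B(X) fails to be transitive: there exist nonzero T, S, R ∈ B(X) with T ∥_v S and S ∥_v R but not T ∥_v R. -/

import Mathlib

open Filter Topology

variable {𝕜 : Type*} [RCLike 𝕜] {X : Type*} [NormedAddCommGroup X] [NormedSpace 𝕜 X]

/-- The numerical radius of a bounded linear operator on a normed space:
`v(T) = sup {|x*(Tx)| : x ∈ S_X, x* ∈ J(x)}`. -/
noncomputable def nrad (T : X →L[𝕜] X) : ℝ :=
  sSup {r : ℝ | ∃ (x : X) (f : X →L[𝕜] 𝕜), ‖x‖ = 1 ∧ ‖f‖ = 1 ∧ f x = 1 ∧ r = ‖f (T x)‖}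

/-- Numerical radius parallelism: `T ∥_v S`. -/
def NRadParallel (T S : X →L[𝕜] X) : Prop :=
  ∃ lam : 𝕜, ‖lam‖ = 1 ∧ nrad (T + lam • S) = nrad T + nrad S

/-- Numerical radius Birkhoff orthogonality: `T ⊥_{vB} S`. -/
def NRadBirkhoff (T S : X →L[𝕜] X) : Prop :=
  ∀ α : 𝕜, nrad T ≤ nrad (T + α • S)


/-!
Take `S = 1`. Every `T` is `v`-parallel to the identity: `λ ↦ v(T + λ)` is continuous, so it
attains its maximum on the unit circle, and that maximum is `v(T) + 1` because each value
`x*(Tx)` of the numerical range can be pushed outwards by a suitable unimodular `λ`. For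
rank-one operators `T = f₁ ⊗ y₁`, `R = f₂ ⊗ y₂` with `fᵢ ∈ J(yᵢ)` one has `v(T) = v(R) = 1`,
while `v(T + λR) ≤ max_θ ‖y₁ + θ y₂‖`; so it suffices to find unit vectors `y₁, y₂` with
`‖y₁ + θ y₂‖ < 2` for every unimodular `θ`.

If there were no such pair, any two unit vectors would have a common norming functional, up to
phase. Parametrize a two-dimensional subspace by an injective `φ` from a Euclidean plane `H`;
through the Riesz representation the dual unit ball becomes a compact set `D ⊆ H`. A point `e`
of `D` of maximal Euclidean norm is the only point of `D` where `re ⟪·, e⟫` reaches `‖φ e‖`,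
and the common norming functionals then force `|⟪e, w⟫| = 1` for every `w` with `‖φ w‖ = 1`,
which fails for `w ⊥ e`.
-/

open scoped InnerProductSpace

lemma RCLike.exists_norm_eq_one_mul_eq_norm (a : 𝕜) : ∃ μ : 𝕜, ‖μ‖ = 1 ∧ μ * a = ‖a‖ := by
  rcases eq_or_ne a 0 with rfl | ha
  · exact ⟨1, norm_one, by simp⟩
  · refine ⟨(starRingEnd 𝕜 a) / ‖a‖, ?_, ?_⟩
    · rw [norm_div, RCLike.norm_conj, RCLike.norm_ofReal, abs_norm,
        div_self (norm_ne_zero_iff.mpr ha)]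
    · rw [div_mul_eq_mul_div, RCLike.conj_mul, pow_two, mul_div_assoc,
        div_self (RCLike.ofReal_ne_zero.mpr (norm_ne_zero_iff.mpr ha)), mul_one]

lemma RCLike.exists_norm_eq_one_norm_add_mul (a b : 𝕜) :
    ∃ θ : 𝕜, ‖θ‖ = 1 ∧ ‖a + θ * b‖ = ‖a‖ + ‖b‖ := by
  obtain ⟨μ, hμ, hμa⟩ := exists_norm_eq_one_mul_eq_norm a
  obtain ⟨ν, hν, hνb⟩ := exists_norm_eq_one_mul_eq_norm b
  have hμ0 : μ ≠ 0 := norm_ne_zero_iff.mp (by rw [hμ]; exact one_ne_zero)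
  refine ⟨ν / μ, by rw [norm_div, hμ, hν, div_one], ?_⟩
  have : μ * (a + ν / μ * b) = ((‖a‖ + ‖b‖ : ℝ) : 𝕜) := by
    rw [mul_add, ← mul_assoc, mul_div_cancel₀ _ hμ0, hμa, hνb]; push_cast; ring
  rw [← one_mul ‖a + _‖, ← hμ, ← norm_mul, this, RCLike.norm_ofReal,
    abs_of_nonneg (by positivity)]

lemma nrad_set_bddAbove (T : X →L[𝕜] X) :
    BddAbove {r : ℝ | ∃ (x : X) (f : X →L[𝕜] 𝕜), ‖x‖ = 1 ∧ ‖f‖ = 1 ∧ f x = 1 ∧ r = ‖f (T x)‖} := by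
  refine ⟨‖T‖, ?_⟩
  rintro r ⟨x, f, hx, hf, -, rfl⟩
  simpa [hf, hx] using f.le_opNorm_of_le (T.le_opNorm_of_le hx.le)

lemma norm_apply_le_nrad (T : X →L[𝕜] X) {x : X} {f : X →L[𝕜] 𝕜}
    (hx : ‖x‖ = 1) (hf : ‖f‖ = 1) (hfx : f x = 1) : ‖f (T x)‖ ≤ nrad T :=
  le_csSup (nrad_set_bddAbove T) ⟨x, f, hx, hf, hfx, rfl⟩

lemma nrad_le_of_forall {T : X →L[𝕜] X} {c : ℝ} (hc : 0 ≤ c)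
    (h : ∀ (x : X) (f : X →L[𝕜] 𝕜), ‖x‖ = 1 → ‖f‖ = 1 → f x = 1 → ‖f (T x)‖ ≤ c) :
    nrad T ≤ c := by
  refine Real.sSup_le ?_ hc
  rintro r ⟨x, f, hx, hf, hfx, rfl⟩
  exact h x f hx hf hfx

lemma nrad_nonneg (T : X →L[𝕜] X) : 0 ≤ nrad T :=
  Real.sSup_nonneg <| by rintro r ⟨x, f, -, -, -, rfl⟩; exact norm_nonneg _

lemma nrad_le_opNorm (T : X →L[𝕜] X) : nrad T ≤ ‖T‖ :=
  nrad_le_of_forall (norm_nonneg T) fun x f hx hf _ ↦ by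
    simpa [hf, hx] using f.le_opNorm_of_le (T.le_opNorm_of_le hx.le)

lemma nrad_add_le (T S : X →L[𝕜] X) : nrad (T + S) ≤ nrad T + nrad S :=
  nrad_le_of_forall (add_nonneg (nrad_nonneg T) (nrad_nonneg S)) fun x f hx hf hfx ↦
    calc ‖f ((T + S) x)‖ ≤ ‖f (T x)‖ + ‖f (S x)‖ := by
          rw [add_apply, map_add]; exact norm_add_le _ _
      _ ≤ nrad T + nrad S :=
          add_le_add (norm_apply_le_nrad T hx hf hfx) (norm_apply_le_nrad S hx hf hfx)

lemma nrad_smul (c : 𝕜) (T : X →L[𝕜] X) : nrad (c • T) = ‖c‖ * nrad T := by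
  rw [nrad, nrad, ← smul_eq_mul, ← Real.sSup_smul_of_nonneg (norm_nonneg c)]
  congr 1
  ext r
  simp only [Set.mem_ofPred_eq, Set.mem_smul_set, smul_apply, map_smul, smul_eq_mul, norm_mul]
  constructor
  · rintro ⟨x, f, hx, hf, hfx, rfl⟩
    exact ⟨_, ⟨x, f, hx, hf, hfx, rfl⟩, rfl⟩
  · rintro ⟨_, ⟨x, f, hx, hf, hfx, rfl⟩, rfl⟩
    exact ⟨x, f, hx, hf, hfx, rfl⟩

lemma lipschitzWith_nrad : LipschitzWith 1 (nrad : (X →L[𝕜] X) → ℝ) :=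
  LipschitzWith.of_le_add fun T S ↦
    calc nrad T = nrad (S + (T - S)) := by rw [add_sub_cancel]
      _ ≤ nrad S + nrad (T - S) := nrad_add_le S (T - S)
      _ ≤ nrad S + dist T S := by rw [dist_eq_norm]; gcongr; exact nrad_le_opNorm _

lemma exists_norm_eq_one_dual_apply_eq_one [Nontrivial X] :
    ∃ (x : X) (f : X →L[𝕜] 𝕜), ‖x‖ = 1 ∧ ‖f‖ = 1 ∧ f x = 1 := by
  obtain ⟨y, hy⟩ := exists_ne (0 : X)
  have hx : ‖(‖y‖⁻¹ : 𝕜) • y‖ = 1 := norm_smul_inv_norm hy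
  obtain ⟨f, hf, hfx⟩ := exists_dual_vector 𝕜 _ (hx ▸ one_ne_zero)
  exact ⟨_, f, hx, hf, by rw [hfx, hx, RCLike.ofReal_one]⟩

lemma nrad_smulRight {x : X} {f : X →L[𝕜] 𝕜} (hx : ‖x‖ = 1) (hf : ‖f‖ = 1) (hfx : f x = 1) :
    nrad (f.smulRight x) = 1 := by
  refine le_antisymm ?_ ?_
  · simpa [ContinuousLinearMap.norm_smulRight_apply, hx, hf] using nrad_le_opNorm (f.smulRight x)
  · simpa [hfx] using norm_apply_le_nrad (f.smulRight x) hx hf hfx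

lemma smulRight_ne_zero_of_apply_eq_one {f : X →L[𝕜] 𝕜} {y : X} (hy : y ≠ 0) (hfy : f y = 1) :
    f.smulRight y ≠ 0 := fun h ↦ hy <| by
  simpa [hfy] using congrArg (fun A : X →L[𝕜] X ↦ A y) h

lemma nrad_one [Nontrivial X] : nrad (1 : X →L[𝕜] X) = 1 := by
  obtain ⟨x, f, hx, hf, hfx⟩ := exists_norm_eq_one_dual_apply_eq_one (𝕜 := 𝕜) (X := X)
  refine le_antisymm ((nrad_le_opNorm _).trans ContinuousLinearMap.norm_id_le) ?_
  simpa [hfx] using norm_apply_le_nrad (1 : X →L[𝕜] X) hx hf hfx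

lemma NRadParallel.symm {T S : X →L[𝕜] X} (h : NRadParallel T S) : NRadParallel S T := by
  obtain ⟨lam, hlam, heq⟩ := h
  have hlam' : ‖starRingEnd 𝕜 lam‖ = 1 := by rwa [RCLike.norm_conj]
  refine ⟨starRingEnd 𝕜 lam, hlam', ?_⟩
  have : S + starRingEnd 𝕜 lam • T = starRingEnd 𝕜 lam • (T + lam • S) := by
    rw [smul_add, smul_smul, RCLike.conj_mul, hlam, RCLike.ofReal_one, one_pow, one_smul,
      add_comm]
  rw [this, nrad_smul, hlam', one_mul, heq, add_comm]

lemma nradParallel_one [Nontrivial X] (T : X →L[𝕜] X) : NRadParallel T 1 := by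
  set h : 𝕜 → ℝ := fun lam ↦ nrad (T + lam • (1 : X →L[𝕜] X))
  have hcont : Continuous h :=
    lipschitzWith_nrad.continuous.comp (continuous_const.add (continuous_id.smul continuous_const))
  obtain ⟨lam₀, hlam₀, hmax⟩ := (isCompact_sphere (0 : 𝕜) 1).exists_isMaxOn
    ⟨1, by simp⟩ hcont.continuousOn
  rw [mem_sphere_zero_iff_norm] at hlam₀
  refine ⟨lam₀, hlam₀, le_antisymm ?_ ?_⟩
  · calc h lam₀ ≤ nrad T + nrad (lam₀ • (1 : X →L[𝕜] X)) := nrad_add_le _ _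
      _ = nrad T + nrad 1 := by rw [nrad_smul, hlam₀, one_mul]
  have key : ∀ (x : X) (f : X →L[𝕜] 𝕜), ‖x‖ = 1 → ‖f‖ = 1 → f x = 1 →
      ‖f (T x)‖ + 1 ≤ h lam₀ := by
    intro x f hx hf hfx
    obtain ⟨θ, hθ, hθa⟩ := RCLike.exists_norm_eq_one_norm_add_mul (f (T x)) 1
    have hle := norm_apply_le_nrad (T + θ • (1 : X →L[𝕜] X)) hx hf hfx
    rw [add_apply, map_add, smul_apply, map_smul, one_apply_eq_self, hfx, smul_eq_mul, hθa,
      norm_one] at hle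
    exact hle.trans (hmax (mem_sphere_zero_iff_norm.mpr hθ))
  obtain ⟨x₀, f₀, hx₀, hf₀, hfx₀⟩ := exists_norm_eq_one_dual_apply_eq_one (𝕜 := 𝕜) (X := X)
  have := nrad_le_of_forall (T := T) (c := h lam₀ - 1)
    (by linarith [key x₀ f₀ hx₀ hf₀ hfx₀, norm_nonneg (f₀ (T x₀))])
    fun x f hx hf hfx ↦ by linarith [key x f hx hf hfx]
  rw [nrad_one]
  linarith

lemma norm_apply_add_norm_apply_le {x y : X} {c : ℝ}
    (h : ∀ θ : 𝕜, ‖θ‖ = 1 → ‖x + θ • y‖ ≤ c) {g : X →L[𝕜] 𝕜} (hg : ‖g‖ ≤ 1) :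
    ‖g x‖ + ‖g y‖ ≤ c := by
  obtain ⟨θ, hθ, hθg⟩ := RCLike.exists_norm_eq_one_norm_add_mul (g x) (g y)
  calc ‖g x‖ + ‖g y‖ = ‖g (x + θ • y)‖ := by rw [map_add, map_smul, smul_eq_mul, hθg]
    _ ≤ ‖x + θ • y‖ := g.le_of_opNorm_le hg _ |>.trans_eq (one_mul _)
    _ ≤ c := h θ hθ

lemma not_nradParallel_smulRight {x₁ x₂ : X} {f₁ f₂ : X →L[𝕜] 𝕜}
    (hx₁ : ‖x₁‖ = 1) (hx₂ : ‖x₂‖ = 1) (hf₁ : ‖f₁‖ = 1) (hf₂ : ‖f₂‖ = 1)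
    (hfx₁ : f₁ x₁ = 1) (hfx₂ : f₂ x₂ = 1) (hlt : ∀ θ : 𝕜, ‖θ‖ = 1 → ‖x₁ + θ • x₂‖ < 2) :
    ¬ NRadParallel (f₁.smulRight x₁) (f₂.smulRight x₂) := by
  rintro ⟨lam, hlam, heq⟩
  rw [nrad_smulRight hx₁ hf₁ hfx₁, nrad_smulRight hx₂ hf₂ hfx₂] at heq
  obtain ⟨θ₀, hθ₀, hmax⟩ := (isCompact_sphere (0 : 𝕜) 1).exists_isMaxOn ⟨1, by simp⟩
    (f := fun θ : 𝕜 ↦ ‖x₁ + θ • x₂‖) (by fun_prop)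
  rw [mem_sphere_zero_iff_norm] at hθ₀
  have hbound : ∀ θ : 𝕜, ‖θ‖ = 1 → ‖x₁ + θ • x₂‖ ≤ ‖x₁ + θ₀ • x₂‖ := fun θ hθ ↦
    hmax (mem_sphere_zero_iff_norm.mpr hθ)
  have : nrad (f₁.smulRight x₁ + lam • f₂.smulRight x₂) ≤ ‖x₁ + θ₀ • x₂‖ := by
    refine nrad_le_of_forall (norm_nonneg _) fun x f hx hf _ ↦ ?_
    have h₁ : ‖f₁ x‖ ≤ 1 := by simpa [hf₁, hx] using f₁.le_opNorm x
    have h₂ : ‖f₂ x‖ ≤ 1 := by simpa [hf₂, hx] using f₂.le_opNorm x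
    calc ‖f ((f₁.smulRight x₁ + lam • f₂.smulRight x₂) x)‖
        = ‖f₁ x * f x₁ + lam * (f₂ x * f x₂)‖ := by
          simp only [add_apply, smul_apply, ContinuousLinearMap.smulRight_apply, map_add,
            map_smul, smul_eq_mul]
      _ ≤ ‖f₁ x‖ * ‖f x₁‖ + ‖f₂ x‖ * ‖f x₂‖ := by
          refine (norm_add_le _ _).trans_eq ?_
          rw [norm_mul, norm_mul, norm_mul, hlam, one_mul]
      _ ≤ ‖f x₁‖ + ‖f x₂‖ := by
          gcongr <;> exact mul_le_of_le_one_left (norm_nonneg _) ‹_›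
      _ ≤ ‖x₁ + θ₀ • x₂‖ := norm_apply_add_norm_apply_le hbound hf.le
  linarith [hlt θ₀ hθ₀]

lemma exists_norm_apply_eq_one_of_two_le_norm_add_smul {x y : X} {θ : 𝕜}
    (hx : ‖x‖ = 1) (hy : ‖y‖ = 1) (hθ : ‖θ‖ = 1) (h : 2 ≤ ‖x + θ • y‖) :
    ∃ g : X →L[𝕜] 𝕜, ‖g‖ ≤ 1 ∧ ‖g x‖ = 1 ∧ ‖g y‖ = 1 := by
  obtain ⟨g, hg, hgxy⟩ := exists_dual_vector 𝕜 (x + θ • y) (by positivity)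
  have hgx : ‖g x‖ ≤ 1 := by simpa [hg, hx] using g.le_opNorm x
  have hgy : ‖g y‖ ≤ 1 := by simpa [hg, hy] using g.le_opNorm y
  have : ‖x + θ • y‖ ≤ ‖g x‖ + ‖g y‖ := by
    calc ‖x + θ • y‖ = ‖g (x + θ • y)‖ := by rw [hgxy, RCLike.norm_ofReal, abs_norm]
      _ ≤ ‖g x‖ + ‖g y‖ := by
        rw [map_add, map_smul, smul_eq_mul]
        exact (norm_add_le _ _).trans_eq (by rw [norm_mul, hθ, one_mul])
  exact ⟨g, hg.le, by linarith, by linarith⟩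

section DualBall

variable {H : Type*} [NormedAddCommGroup H] [InnerProductSpace 𝕜 H]

/-- The unit ball of the dual of `H` normed by `w ↦ ‖φ w‖`, realized inside `H` by the
inner product. -/
def dualBall (φ : H →L[𝕜] X) : Set H := {p | ∀ w, ‖⟪p, w⟫_𝕜‖ ≤ ‖φ w‖}

variable {φ : H →L[𝕜] X}

lemma zero_mem_dualBall : (0 : H) ∈ dualBall φ := fun w ↦ by simp

lemma smul_mem_dualBall {p : H} {μ : 𝕜} (hμ : ‖μ‖ = 1) (hp : p ∈ dualBall φ) :
    μ • p ∈ dualBall φ := fun w ↦ by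
  rw [inner_smul_left, norm_mul, RCLike.norm_conj, hμ, one_mul]; exact hp w

lemma norm_mul_self_le_of_mem_dualBall {p : H} (hp : p ∈ dualBall φ) : ‖p‖ * ‖p‖ ≤ ‖φ p‖ :=
  calc ‖p‖ * ‖p‖ = ‖⟪p, p⟫_𝕜‖ := by
        rw [inner_self_eq_norm_sq_to_K, norm_pow, RCLike.norm_ofReal, abs_norm, sq]
    _ ≤ ‖φ p‖ := hp p

lemma norm_le_of_mem_dualBall {p : H} (hp : p ∈ dualBall φ) : ‖p‖ ≤ ‖φ‖ := by
  rcases eq_or_ne p 0 with rfl | hp0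
  · simp
  exact le_of_mul_le_mul_right ((norm_mul_self_le_of_mem_dualBall hp).trans (φ.le_opNorm p))
    (norm_pos_iff.mpr hp0)

lemma isCompact_dualBall [FiniteDimensional 𝕜 H] : IsCompact (dualBall φ) := by
  have := FiniteDimensional.proper_rclike 𝕜 H
  refine (isCompact_closedBall (0 : H) ‖φ‖).of_isClosed_subset ?_ fun p hp ↦ ?_
  · simp only [dualBall, Set.ofPred_forall]
    exact isClosed_iInter fun w ↦ isClosed_le (by fun_prop) continuous_const
  · simpa using norm_le_of_mem_dualBall hp

lemma exists_mem_dualBall_norm_inner_eq_one [CompleteSpace H]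
    (hX : ∀ x y : X, ‖x‖ = 1 → ‖y‖ = 1 → ∃ g : X →L[𝕜] 𝕜, ‖g‖ ≤ 1 ∧ ‖g x‖ = 1 ∧ ‖g y‖ = 1)
    {w₁ w₂ : H} (hw₁ : ‖φ w₁‖ = 1) (hw₂ : ‖φ w₂‖ = 1) :
    ∃ p ∈ dualBall φ, ‖⟪p, w₁⟫_𝕜‖ = 1 ∧ ‖⟪p, w₂⟫_𝕜‖ = 1 := by
  obtain ⟨g, hg, hg₁, hg₂⟩ := hX _ _ hw₁ hw₂
  refine ⟨(InnerProductSpace.toDual 𝕜 H).symm (g.comp φ), fun w ↦ ?_, ?_, ?_⟩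
  · rw [InnerProductSpace.toDual_symm_apply]
    exact (g.le_of_opNorm_le hg _).trans_eq (one_mul _)
  · rwa [InnerProductSpace.toDual_symm_apply]
  · rwa [InnerProductSpace.toDual_symm_apply]

lemma norm_inner_eq_one_of_isMaxOn [CompleteSpace H] (hφ : Function.Injective φ)
    (hX : ∀ x y : X, ‖x‖ = 1 → ‖y‖ = 1 → ∃ g : X →L[𝕜] 𝕜, ‖g‖ ≤ 1 ∧ ‖g x‖ = 1 ∧ ‖g y‖ = 1)
    {e : H} (he : e ∈ dualBall φ) (hmax : IsMaxOn (‖·‖) (dualBall φ) e) (he0 : e ≠ 0)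
    {w : H} (hw : ‖φ w‖ = 1) : ‖⟪e, w⟫_𝕜‖ = 1 := by
  have hφe : φ e ≠ 0 := (map_ne_zero_iff φ hφ).mpr he0
  have he' : ‖φ ((‖φ e‖⁻¹ : 𝕜) • e)‖ = 1 := by rw [map_smul]; exact norm_smul_inv_norm hφe
  obtain ⟨p, hp, hpw, hpe'⟩ := exists_mem_dualBall_norm_inner_eq_one hX hw he'
  have hpe : ‖⟪p, e⟫_𝕜‖ = ‖φ e‖ := by
    rw [inner_smul_right, norm_mul, norm_inv, RCLike.norm_ofReal, abs_norm] at hpe'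
    field_simp at hpe'
    exact hpe'
  obtain ⟨μ, hμ, hμp⟩ := RCLike.exists_norm_eq_one_mul_eq_norm ⟪p, e⟫_𝕜
  set p' := starRingEnd 𝕜 μ • p
  have hp' : p' ∈ dualBall φ := smul_mem_dualBall (by rwa [RCLike.norm_conj]) hp
  -- `‖p' - e‖² = ‖p'‖² - 2 ‖φ e‖ + ‖e‖² ≤ 0`, as `‖p'‖ ≤ ‖e‖` and `‖e‖² ≤ ‖φ e‖`
  have hp'e : p' = e := by
    have hre : RCLike.re ⟪p', e⟫_𝕜 = ‖φ e‖ := by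
      rw [inner_smul_left, RCLike.conj_conj, hμp, hpe, RCLike.ofReal_re]
    have hle : ‖p'‖ ^ 2 ≤ ‖e‖ ^ 2 := pow_le_pow_left₀ (norm_nonneg _) (hmax hp') 2
    have hee := norm_mul_self_le_of_mem_dualBall he
    have : ‖p' - e‖ ^ 2 ≤ 0 := by rw [norm_sub_sq (𝕜 := 𝕜), hre]; nlinarith
    exact sub_eq_zero.mp (norm_eq_zero.mp (by nlinarith [norm_nonneg (p' - e)]))
  rw [← hp'e, inner_smul_left, RCLike.conj_conj, norm_mul, hμ, one_mul, hpw]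

lemma not_forall_exists_norm_apply_eq_one [FiniteDimensional 𝕜 H] (hH : 2 ≤ Module.finrank 𝕜 H)
    (hφ : Function.Injective φ) :
    ¬ ∀ x y : X, ‖x‖ = 1 → ‖y‖ = 1 → ∃ g : X →L[𝕜] 𝕜, ‖g‖ ≤ 1 ∧ ‖g x‖ = 1 ∧ ‖g y‖ = 1 := by
  intro hX
  have := FiniteDimensional.complete 𝕜 H
  obtain ⟨e, he, hmax⟩ := (isCompact_dualBall (φ := φ)).exists_isMaxOn ⟨0, zero_mem_dualBall⟩
    continuous_norm.continuousOn (f := (‖·‖ : H → ℝ))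
  obtain ⟨w, hwe, hw0⟩ := (Submodule.ne_bot_iff _).mp
    (LinearMap.ker_ne_bot_of_finrank_lt (f := innerₛₗ 𝕜 e) (by rw [Module.finrank_self]; omega))
  have hw : ‖φ ((‖φ w‖⁻¹ : 𝕜) • w)‖ = 1 := by
    rw [map_smul]; exact norm_smul_inv_norm ((map_ne_zero_iff φ hφ).mpr hw0)
  have he0 : e ≠ 0 := by
    obtain ⟨p, hp, hpw, -⟩ := exists_mem_dualBall_norm_inner_eq_one hX hw hw
    have hp0 : p ≠ 0 := by rintro rfl; simp at hpw
    exact norm_pos_iff.mp ((norm_pos_iff.mpr hp0).trans_le (hmax hp))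
  have := norm_inner_eq_one_of_isMaxOn hφ hX he hmax he0 hw
  rw [inner_smul_right, ← innerₛₗ_apply_apply, LinearMap.mem_ker.mp hwe, mul_zero,
    norm_zero] at this
  exact zero_ne_one this

end DualBall

theorem exists_norm_eq_one_forall_norm_add_smul_lt_two (hdim : 2 ≤ Module.rank 𝕜 X) :
    ∃ x y : X, ‖x‖ = 1 ∧ ‖y‖ = 1 ∧ ∀ θ : 𝕜, ‖θ‖ = 1 → ‖x + θ • y‖ < 2 := by
  obtain ⟨v, hv⟩ := exists_linearIndependent_of_le_rank hdim
  let φ : EuclideanSpace 𝕜 (Fin 2) →L[𝕜] X := LinearMap.toContinuousLinearMap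
    (Fintype.linearCombination 𝕜 v ∘ₗ (WithLp.linearEquiv 2 𝕜 (Fin 2 → 𝕜)).toLinearMap)
  have hφ : Function.Injective φ :=
    hv.fintypeLinearCombination_injective.comp (WithLp.linearEquiv 2 𝕜 _).injective
  by_contra! h
  exact not_forall_exists_norm_apply_eq_one (by simp) hφ fun x y hx hy ↦
    let ⟨_, hθ, h2⟩ := h x y hx hy
    exists_norm_apply_eq_one_of_two_le_norm_add_smul hx hy hθ h2

theorem stmt12 (hdim : 2 ≤ Module.rank 𝕜 X) :
    ∃ T S R : X →L[𝕜] X, T ≠ 0 ∧ S ≠ 0 ∧ R ≠ 0 ∧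
      NRadParallel T S ∧ NRadParallel S R ∧ ¬ NRadParallel T R := by
  obtain ⟨y₁, y₂, hy₁, hy₂, hlt⟩ := exists_norm_eq_one_forall_norm_add_smul_lt_two hdim
  have hy₁0 : y₁ ≠ 0 := norm_ne_zero_iff.mp (hy₁ ▸ one_ne_zero)
  have hy₂0 : y₂ ≠ 0 := norm_ne_zero_iff.mp (hy₂ ▸ one_ne_zero)
  have : Nontrivial X := nontrivial_of_ne y₁ 0 hy₁0
  obtain ⟨f₁, hf₁, hfy₁⟩ := exists_dual_vector 𝕜 y₁ (norm_ne_zero_iff.mpr hy₁0)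
  obtain ⟨f₂, hf₂, hfy₂⟩ := exists_dual_vector 𝕜 y₂ (norm_ne_zero_iff.mpr hy₂0)
  rw [hy₁, RCLike.ofReal_one] at hfy₁
  rw [hy₂, RCLike.ofReal_one] at hfy₂
  exact ⟨f₁.smulRight y₁, 1, f₂.smulRight y₂, smulRight_ne_zero_of_apply_eq_one hy₁0 hfy₁,
    one_ne_zero, smulRight_ne_zero_of_apply_eq_one hy₂0 hfy₂, nradParallel_one _,
    (nradParallel_one _).symm, not_nradParallel_smulRight hy₁ hy₂ hf₁ hf₂ hfy₁ hfy₂ hlt⟩
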